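/- The minimum of the quotient cost(S)/min{w(S),w(V∖S)} over all ∅≠S⊊V in G is at least (3β+T)/(12n) if and only if there is no pair i,j∈{1,…,n} with i+j≤n and a_i + b_j < c_{i+j}. -/

import Mathlib

open Finset

namespace SCLB

inductive V (n : ℕ) : Type
  | u : V n
  | v : V n
  | A : Fin n → V n
  | B : Fin n → V n
  | C : Fin n → V n
  deriving DecidableEq, Fintype

/-- Edges: `(p, some i)` is the `i`-th edge (0-indexed) on path `p` (`p = 0,1,2` for
`P_A, P_B, P_C`), joining the `(i+1)`-st path vertex to the next one; `(p, none)` is the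
special edge `e_A`, `e_B`, `e_C` respectively. -/
abbrev E (n : ℕ) := Fin 3 × Option (Fin n)

def Tsum (n : ℕ) (a b c : Fin n → ℕ) : ℕ := ∑ i, (a i + b i + c i)

def beta (n : ℕ) (a b c : Fin n → ℕ) : ℕ := 4 * Tsum n a b c * n ^ 2

def firstV {n : ℕ} (f : Fin n → V n) (dflt : V n) : V n :=
  if h : 0 < n then f ⟨0, h⟩ else dflt

def nextV {n : ℕ} (f : Fin n → V n) (top : V n) (i : Fin n) : V n :=
  if h : i.val + 1 < n then f ⟨i.val + 1, h⟩ else top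

/-- The two endpoints of each edge. -/
def ends (n : ℕ) : E n → V n × V n
  | (p, none) =>
      if p = 0 then (V.v, firstV V.A V.u)
      else if p = 1 then (V.v, firstV V.B V.u)
      else (V.u, firstV V.C V.v)
  | (p, some i) =>
      if p = 0 then (V.A i, nextV V.A V.u i)
      else if p = 1 then (V.B i, nextV V.B V.u i)
      else (V.C i, nextV V.C V.v i)

/-- Edge costs. -/
def ecost (n : ℕ) (a b c : Fin n → ℕ) : E n → ℚ
  | (_, none) => 1210 * (n : ℚ) ^ 2 * (2 * (beta n a b c : ℚ) + (Tsum n a b c : ℚ))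
  | (p, some i) =>
      if p = 0 then (beta n a b c : ℚ) + (a i : ℚ)
      else if p = 1 then (beta n a b c : ℚ) + (b i : ℚ)
      else (beta n a b c : ℚ) + (Tsum n a b c : ℚ) - (c i : ℚ)

/-- Vertex weights. -/
def wt (n : ℕ) : V n → ℚ
  | V.u => 10 * n
  | V.v => 11 * n
  | _ => 1

/-- The cut of `S`: edges with exactly one endpoint in `S`. -/
def cut (n : ℕ) (S : Finset (V n)) : Finset (E n) :=
  Finset.univ.filter fun e => ¬(((ends n e).1 ∈ S) ↔ ((ends n e).2 ∈ S))

def cutCost (n : ℕ) (a b c : Fin n → ℕ) (S : Finset (V n)) : ℚ :=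
  ∑ e ∈ cut n S, ecost n a b c e

def wOf (n : ℕ) (S : Finset (V n)) : ℚ := ∑ x ∈ S, wt n x

def quotientVal (n : ℕ) (a b c : Fin n → ℕ) (S : Finset (V n)) : ℚ :=
  cutCost n a b c S / min (wOf n S) (wOf n Sᶜ)

def sparsity (n : ℕ) (a b c : Fin n → ℕ) (S : Finset (V n)) : ℚ :=
  cutCost n a b c S / (wOf n S * wOf n Sᶜ)

def IsBisection (n : ℕ) (S : Finset (V n)) : Prop :=
  wOf n S = 12 * n ∧ wOf n Sᶜ = 12 * n

def PA (n : ℕ) : Finset (E n) := Finset.univ.filter fun e => e.1 = 0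
def PB (n : ℕ) : Finset (E n) := Finset.univ.filter fun e => e.1 = 1
def PC (n : ℕ) : Finset (E n) := Finset.univ.filter fun e => e.1 = 2

/-!
The lighter side of a cut weighs at most `12n`, so every cut of cost at least `3β + T` satisfies
the bound; this covers all cuts through a special edge and all cuts through four or more path
edges, as each path edge costs at least `β ≥ T`. By symmetry let `v ∈ S`. If also `u ∈ S`, each of
the three `u`–`v` paths is cut an even number of times, so some path twice, while `Sᶜ` weighs at
most `3n`. If `u ∉ S`, each path is cut exactly once, at its edges leaving `A_i`, `B_j`, `C_k`
(0-indexed); then `cost(S) = 3β + T + a_i + b_j - c_k` and `w(S) = 12n + (i + j + 1) - k`. Off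
balance the lighter side loses a unit of weight, which pays for `12n c_k ≤ 12n T ≤ 3β`; on balance
the bound says exactly `c_k ≤ a_i + b_j` with `k = i + j + 1`.
-/

section Flips

variable (s : ℕ → Prop) [DecidablePred s]

def flips (N : ℕ) : Finset ℕ := (range N).filter fun k => ¬(s k ↔ s (k + 1))

variable {s}

lemma iff_of_forall_flip_iff {N k₀ : ℕ} (h : ∀ k < N, (¬(s k ↔ s (k + 1)) ↔ k = k₀)) :
    ∀ m ≤ N, (s m ↔ (s 0 ↔ m ≤ k₀)) := by
  intro m hm
  induction m with
  | zero => simp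
  | succ m ih =>
    have hflip := h m (by omega)
    have hm' := ih (by omega)
    by_cases hmk : m = k₀
    · subst hmk
      simp only [le_refl, iff_true, Nat.not_succ_le_self, iff_false] at hm' ⊢
      tauto
    · have : m + 1 ≤ k₀ ↔ m ≤ k₀ := by omega
      rw [this]
      tauto

lemma iff_of_flips_eq_empty {N : ℕ} (h : flips s N = ∅) : ∀ m ≤ N, (s m ↔ s 0) := by
  intro m hm
  induction m with
  | zero => rfl
  | succ m ih =>
    have : m ∉ flips s N := h ▸ notMem_empty m
    simp only [flips, mem_filter, mem_range, not_and, not_not] at this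
    exact (this (by omega)).symm.trans (ih (by omega))

lemma flips_eq_singleton_iff {N k₀ : ℕ} (hk : k₀ < N) :
    flips s N = {k₀} ↔ ∀ m ≤ N, (s m ↔ (s 0 ↔ m ≤ k₀)) := by
  constructor
  · intro h
    refine iff_of_forall_flip_iff fun k hk => ?_
    have := congrArg (k ∈ ·) h
    simp only [flips, mem_filter, mem_range, mem_singleton, eq_iff_iff] at this
    simpa [hk] using this
  · intro h
    ext k
    simp only [flips, mem_filter, mem_range, mem_singleton]
    constructor
    · rintro ⟨hkN, hflip⟩
      rw [h k hkN.le, h (k + 1) hkN] at hflip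
      by_contra hne
      have : k + 1 ≤ k₀ ↔ k ≤ k₀ := by omega
      exact hflip (by rw [this])
    · rintro rfl
      refine ⟨hk, ?_⟩
      rw [h k hk.le, h (k + 1) hk]
      simp

end Flips

section Paths

variable {n : ℕ}

def inner : Fin 3 → Fin n → V n := ![V.A, V.B, V.C]

def source : Fin 3 → V n := ![V.v, V.v, V.u]

def target : Fin 3 → V n := ![V.u, V.u, V.v]

/-- `pathVert p 0, …, pathVert p (n + 1)` are the vertices of `P_A`, `P_B`, `P_C` (`p = 0, 1, 2`),
starting at the end of the special edge. -/
def pathVert (p : Fin 3) (m : ℕ) : V n :=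
  if h₀ : m = 0 then source p else if h : m ≤ n then inner p ⟨m - 1, by omega⟩ else target p

def pathEdge (p : Fin 3) (m : ℕ) : E n :=
  (p, if h : 0 < m ∧ m ≤ n then some ⟨m - 1, by omega⟩ else none)

@[simp] lemma pathVert_zero (p : Fin 3) : pathVert (n := n) p 0 = source p := by
  simp [pathVert]

@[simp] lemma pathVert_succ (p : Fin 3) (i : Fin n) : pathVert p (i + 1) = inner p i := by
  simp [pathVert, Nat.succ_le_of_lt i.isLt]

@[simp] lemma pathVert_last (p : Fin 3) : pathVert (n := n) p (n + 1) = target p := by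
  simp [pathVert]

lemma forall_pathVert {p : Fin 3} {P : ℕ → V n → Prop} (h0 : P 0 (source p))
    (hsucc : ∀ i : Fin n, P (i + 1) (inner p i)) (hlast : P (n + 1) (target p)) :
    ∀ m ≤ n + 1, P m (pathVert p m) := by
  intro m hm
  rcases Nat.eq_zero_or_pos m with rfl | hpos
  · simpa using h0
  rcases hm.eq_or_lt with rfl | hlt
  · simpa using hlast
  obtain ⟨i, rfl⟩ : ∃ i : Fin n, m = i + 1 := ⟨⟨m - 1, by omega⟩, (Nat.sub_add_cancel hpos).symm⟩
  simpa using hsucc i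

lemma ends_pathEdge (hn : 0 < n) (p : Fin 3) {m : ℕ} (hm : m ≤ n) :
    ends n (pathEdge p m) = (pathVert p m, pathVert p (m + 1)) := by
  cases m with
  | zero =>
    fin_cases p <;> simp [pathEdge, ends, firstV, hn, pathVert, inner, source, hn.ne']
  | succ k =>
    fin_cases p <;> simp [pathEdge, ends, nextV, hm, pathVert, inner, target]

lemma sum_edges {M : Type*} [AddCommMonoid M] (g : E n → M) :
    ∑ e, g e = ∑ p, ∑ m ∈ range (n + 1), g (pathEdge p m) := by
  rw [Fintype.sum_prod_type]
  refine sum_congr rfl fun p _ => ?_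
  rw [Fintype.sum_option, sum_range_succ', add_comm,
    ← Fin.sum_univ_eq_sum_range (fun m => g (pathEdge p (m + 1)))]
  simp [pathEdge]

end Paths

section Graph

variable {n : ℕ} (a b c : Fin n → ℕ)

def pathCut (S : Finset (V n)) (p : Fin 3) : Finset ℕ :=
  flips (fun m => pathVert p m ∈ S) (n + 1)

lemma cutCost_eq_sum_pathCut (hn : 0 < n) (S : Finset (V n)) :
    cutCost n a b c S = ∑ p, ∑ m ∈ pathCut S p, ecost n a b c (pathEdge p m) := by
  rw [cutCost, cut, sum_filter, sum_edges]
  refine sum_congr rfl fun p _ => ?_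
  rw [pathCut, flips, sum_filter]
  refine sum_congr rfl fun m hm => ?_
  rw [ends_pathEdge hn p (Nat.lt_succ_iff.mp (mem_range.mp hm))]

lemma ecost_pathEdge_zero (p : Fin 3) :
    ecost n a b c (pathEdge p 0) = 1210 * (n : ℚ) ^ 2 * (2 * beta n a b c + Tsum n a b c) := by
  simp [pathEdge, ecost]

lemma ecost_pathEdge_succ (i : Fin n) :
    ecost n a b c (pathEdge 0 (i + 1)) = beta n a b c + a i ∧
    ecost n a b c (pathEdge 1 (i + 1)) = beta n a b c + b i ∧
    ecost n a b c (pathEdge 2 (i + 1)) = beta n a b c + Tsum n a b c - c i := by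
  simp [pathEdge, ecost, Nat.succ_le_of_lt i.isLt]

lemma c_le_Tsum (i : Fin n) : c i ≤ Tsum n a b c :=
  (Nat.le_add_left _ _).trans
    (single_le_sum (f := fun i => a i + b i + c i) (fun _ _ => Nat.zero_le _) (mem_univ i))

lemma beta_eq : (beta n a b c : ℚ) = 4 * Tsum n a b c * (n : ℚ) ^ 2 := by
  simp [beta]

lemma four_mul_mul_Tsum_le_beta (hn : 0 < n) :
    4 * (n : ℚ) * Tsum n a b c ≤ beta n a b c := by
  have hn1 : (1 : ℚ) ≤ n := by exact_mod_cast hn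
  rw [beta_eq]
  nlinarith [(by positivity : (0 : ℚ) ≤ 4 * Tsum n a b c * n)]

lemma Tsum_le_beta (hn : 0 < n) : (Tsum n a b c : ℚ) ≤ beta n a b c := by
  have hn1 : (1 : ℚ) ≤ n := by exact_mod_cast hn
  nlinarith [four_mul_mul_Tsum_le_beta a b c hn, (by positivity : (0 : ℚ) ≤ Tsum n a b c)]

lemma three_beta_add_Tsum_le_ecost_pathEdge_zero (hn : 0 < n) (p : Fin 3) :
    3 * (beta n a b c : ℚ) + Tsum n a b c ≤ ecost n a b c (pathEdge p 0) := by
  have hn1 : (1 : ℚ) ≤ (n : ℚ) ^ 2 := one_le_pow₀ (by exact_mod_cast hn)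
  rw [ecost_pathEdge_zero]
  nlinarith [(by positivity : (0 : ℚ) ≤ 2 * beta n a b c + Tsum n a b c)]

lemma beta_le_ecost (hn : 0 < n) (e : E n) : (beta n a b c : ℚ) ≤ ecost n a b c e := by
  obtain ⟨p, _ | i⟩ := e
  · have := three_beta_add_Tsum_le_ecost_pathEdge_zero a b c hn p
    simp only [pathEdge, lt_irrefl, false_and, dite_false] at this
    linarith [(by positivity : (0 : ℚ) ≤ beta n a b c), (by positivity : (0 : ℚ) ≤ Tsum n a b c)]
  · have hc : (c i : ℚ) ≤ Tsum n a b c := by exact_mod_cast c_le_Tsum a b c i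
    fin_cases p <;>
      simp only [ecost, Fin.isValue, Fin.reduceFinMk, Fin.zero_eta, Fin.mk_one, Fin.reduceEq,
        one_ne_zero, ↓reduceIte] <;>
      linarith [(a i).cast_nonneg (α := ℚ), (b i).cast_nonneg (α := ℚ)]

def vertEquiv : Bool ⊕ (Fin 3 × Fin n) ≃ V n where
  toFun
    | .inl true => V.u
    | .inl false => V.v
    | .inr (p, i) => inner p i
  invFun
    | V.u => .inl true
    | V.v => .inl false
    | V.A i => .inr (0, i)
    | V.B i => .inr (1, i)
    | V.C i => .inr (2, i)
  left_inv x := by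
    rcases x with (_ | _) | ⟨p, i⟩
    · rfl
    · rfl
    · fin_cases p <;> rfl
  right_inv x := by cases x <;> rfl

lemma sum_univ_V {M : Type*} [AddCommMonoid M] (g : V n → M) :
    ∑ x, g x = g V.u + g V.v + ∑ p, ∑ i, g (inner p i) := by
  rw [← vertEquiv.sum_comp, Fintype.sum_sum_type, Fintype.sum_prod_type]
  simp [vertEquiv]

lemma wt_inner (p : Fin 3) (i : Fin n) : wt n (inner p i) = 1 := by
  fin_cases p <;> rfl

lemma wOf_eq (S : Finset (V n)) :
    wOf n S = (if V.u ∈ S then 10 * (n : ℚ) else 0) + (if V.v ∈ S then 11 * (n : ℚ) else 0) +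
      ∑ p, (#{i | inner p i ∈ S} : ℚ) := by
  rw [wOf, ← univ_inter S, ← sum_ite_mem, sum_univ_V]
  simp only [wt_inner, sum_boole]
  simp [wt, add_assoc]

lemma wOf_add_wOf_compl (S : Finset (V n)) : wOf n S + wOf n Sᶜ = 24 * n := by
  rw [wOf, wOf, sum_add_sum_compl, sum_univ_V]
  simp only [wt_inner, sum_const, card_univ, Fintype.card_fin, nsmul_eq_mul, mul_one]
  simp only [wt]
  ring

lemma wOf_pos (hn : 0 < n) {S : Finset (V n)} (hS : S.Nonempty) : 0 < wOf n S :=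
  sum_pos (fun x _ => by cases x <;> simp [wt, hn]) hS

lemma cutCost_compl (S : Finset (V n)) : cutCost n a b c Sᶜ = cutCost n a b c S := by
  simp only [cutCost, cut, mem_compl, not_iff_not]

lemma ecost_nonneg (hn : 0 < n) (e : E n) : 0 ≤ ecost n a b c e :=
  (Nat.cast_nonneg _).trans (beta_le_ecost a b c hn e)

lemma beta_mul_card_pathCut_le_cutCost (hn : 0 < n) (S : Finset (V n)) :
    (beta n a b c : ℚ) * ∑ p, (#(pathCut S p) : ℚ) ≤ cutCost n a b c S := by
  rw [cutCost_eq_sum_pathCut a b c hn, mul_sum]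
  refine sum_le_sum fun p _ => ?_
  rw [mul_comm, ← nsmul_eq_mul]
  exact card_nsmul_le_sum _ _ _ fun m _ => beta_le_ecost a b c hn _

lemma ecost_le_cutCost (hn : 0 < n) {S : Finset (V n)} {p : Fin 3} {m : ℕ}
    (hm : m ∈ pathCut S p) : ecost n a b c (pathEdge p m) ≤ cutCost n a b c S := by
  rw [cutCost_eq_sum_pathCut a b c hn]
  refine le_trans ?_ (single_le_sum (fun p _ => sum_nonneg fun m _ => ecost_nonneg a b c hn _)
    (mem_univ p))
  exact single_le_sum (fun m _ => ecost_nonneg a b c hn _) hm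

end Graph

section PathMembership

variable {n : ℕ} {S : Finset (V n)} {p : Fin 3}

lemma lt_of_mem_pathCut {m : ℕ} (hm : m ∈ pathCut S p) : m < n + 1 :=
  mem_range.mp (mem_filter.mp hm).1

lemma mem_iff_of_pathCut_eq_empty (h : pathCut S p = ∅) :
    (∀ i, inner p i ∈ S ↔ source p ∈ S) ∧ (target p ∈ S ↔ source p ∈ S) := by
  have key := iff_of_flips_eq_empty h
  refine ⟨fun i => ?_, ?_⟩
  · simpa using key (i + 1) (by omega)
  · simpa using key (n + 1) le_rfl

lemma pathCut_eq_singleton_iff {m : ℕ} (hm : m < n + 1) :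
    pathCut S p = {m} ↔
      (∀ i : Fin n, (inner p i ∈ S ↔ (source p ∈ S ↔ i + 1 ≤ m))) ∧
        (target p ∈ S ↔ source p ∉ S) := by
  rw [pathCut, flips_eq_singleton_iff hm, pathVert_zero]
  constructor
  · intro key
    refine ⟨fun i => ?_, ?_⟩
    · simpa using key (i + 1) (by omega)
    · simpa [not_le.mpr hm] using key (n + 1) le_rfl
  · rintro ⟨hinner, htarget⟩
    exact forall_pathVert (P := fun k x => x ∈ S ↔ (source p ∈ S ↔ k ≤ m)) (by simp) hinner
      (by simpa [not_le.mpr hm] using htarget)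

lemma mem_iff_of_pathCut_eq_singleton {m : ℕ} (h : pathCut S p = {m}) :
    (∀ i : Fin n, (inner p i ∈ S ↔ (source p ∈ S ↔ i + 1 ≤ m))) ∧
      (target p ∈ S ↔ source p ∉ S) :=
  (pathCut_eq_singleton_iff (lt_of_mem_pathCut (h ▸ mem_singleton_self m))).mp h

end PathMembership

section BothEndsInside

variable {n : ℕ} {S : Finset (V n)}

lemma two_le_card_pathCut (hu : V.u ∈ S) (hv : V.v ∈ S) (hS : S ≠ univ) :
    2 ≤ ∑ p, #(pathCut S p) := by
  have hsource (p : Fin 3) : source p ∈ S := by fin_cases p <;> simpa [source]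
  have htarget (p : Fin 3) : target p ∈ S := by fin_cases p <;> simpa [target]
  have hne_one (p : Fin 3) : #(pathCut S p) ≠ 1 := by
    intro h
    obtain ⟨m, hm⟩ := card_eq_one.mp h
    exact (mem_iff_of_pathCut_eq_singleton hm).2.mp (htarget p) (hsource p)
  have hne_zero : ¬ ∀ p, pathCut S p = ∅ := by
    intro h
    refine hS (eq_univ_iff_forall.mpr fun x => ?_)
    obtain ⟨(_ | _) | ⟨p, i⟩, rfl⟩ := vertEquiv.surjective x
    · exact hv
    · exact hu
    · exact ((mem_iff_of_pathCut_eq_empty (h p)).1 i).mpr (hsource p)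
  simp only [← card_eq_zero, Fin.forall_fin_succ, IsEmpty.forall_iff, and_true,
    Fin.succ_zero_eq_one, Fin.succ_one_eq_two] at hne_zero
  have := hne_one 0; have := hne_one 1; have := hne_one 2
  rw [Fin.sum_univ_three]
  omega

lemma wOf_compl_le (hu : V.u ∈ S) (hv : V.v ∈ S) : wOf n Sᶜ ≤ 3 * n := by
  have hcard (p : Fin 3) : (#{i | inner p i ∈ Sᶜ} : ℚ) ≤ n := by
    exact_mod_cast (card_filter_le _ _).trans (card_univ.trans (Fintype.card_fin n)).le
  rw [wOf_eq, if_neg (by simpa), if_neg (by simpa), Fin.sum_univ_three]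
  linarith [hcard 0, hcard 1, hcard 2]

end BothEndsInside

section OneCutPerPath

variable {n : ℕ} (a b c : Fin n → ℕ) {S : Finset (V n)}

lemma exists_pathCut_eq_singleton (hu : V.u ∉ S) (hv : V.v ∈ S)
    (hcard : ∑ p, #(pathCut S p) ≤ 3) (hzero : ∀ p, 0 ∉ pathCut S p) (p : Fin 3) :
    ∃ i : Fin n, pathCut S p = {(i : ℕ) + 1} := by
  have hne (q : Fin 3) : pathCut S q ≠ ∅ := fun h => by
    have := (mem_iff_of_pathCut_eq_empty h).2
    fin_cases q <;> simp_all [source, target]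
  have hpos (q : Fin 3) := card_pos.mpr (nonempty_iff_ne_empty.mpr (hne q))
  have hone : #(pathCut S p) = 1 := by
    rw [Fin.sum_univ_three] at hcard
    have := hpos 0; have := hpos 1; have := hpos 2
    fin_cases p <;> simp only [Fin.isValue, Fin.zero_eta, Fin.mk_one, Fin.reduceFinMk] <;> omega
  obtain ⟨m, hm⟩ := card_eq_one.mp hone
  have hlt := lt_of_mem_pathCut (hm ▸ mem_singleton_self m)
  obtain ⟨k, rfl⟩ := Nat.exists_eq_add_one.mpr
    (Nat.pos_of_ne_zero fun h => hzero p (h ▸ hm ▸ mem_singleton_self m))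
  exact ⟨⟨k, by omega⟩, hm⟩

variable (i j k : Fin n)

lemma cutCost_of_pathCut_eq (hn : 0 < n) (hA : pathCut S 0 = {(i : ℕ) + 1})
    (hB : pathCut S 1 = {(j : ℕ) + 1}) (hC : pathCut S 2 = {(k : ℕ) + 1}) :
    cutCost n a b c S = 3 * (beta n a b c : ℚ) + Tsum n a b c + (a i + b j - c k) := by
  rw [cutCost_eq_sum_pathCut a b c hn, Fin.sum_univ_three, hA, hB, hC]
  simp only [sum_singleton, ecost_pathEdge_succ]
  ring

lemma card_inner_mem_of_pathCut_eq {p : Fin 3} (hp : pathCut S p = {(i : ℕ) + 1}) :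
    (#{t | inner p t ∈ S} : ℚ) = if source p ∈ S then (i : ℚ) + 1 else n - ((i : ℚ) + 1) := by
  have hmem := (mem_iff_of_pathCut_eq_singleton hp).1
  simp only [Nat.add_one_le_iff] at hmem
  have hsplit := card_filter_add_card_filter_not (s := (univ : Finset (Fin n)))
    (fun t : Fin n => (t : ℕ) < i + 1)
  rw [card_univ, Fintype.card_fin, Fin.card_filter_val_lt, min_eq_right (by omega)] at hsplit
  have hsplit' : (i : ℚ) + 1 + #{t : Fin n | ¬ (t : ℕ) < i + 1} = n := by exact_mod_cast hsplit
  split_ifs with hs <;> simp only [hs, true_iff, false_iff] at hmem <;> simp only [hmem]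
  · rw [Fin.card_filter_val_lt, min_eq_right (by omega)]
    push_cast; ring
  · linarith

lemma wOf_of_pathCut_eq (hu : V.u ∉ S) (hv : V.v ∈ S) (hA : pathCut S 0 = {(i : ℕ) + 1})
    (hB : pathCut S 1 = {(j : ℕ) + 1}) (hC : pathCut S 2 = {(k : ℕ) + 1}) :
    wOf n S = 12 * n + ((i : ℚ) + j + 1 - k) := by
  rw [wOf_eq, Fin.sum_univ_three, card_inner_mem_of_pathCut_eq i hA,
    card_inner_mem_of_pathCut_eq j hB, card_inner_mem_of_pathCut_eq k hC]
  simp only [source, hu, hv, Matrix.cons_val_zero, Matrix.cons_val_one, Matrix.cons_val,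
    ↓reduceIte]
  ring

end OneCutPerPath

section LowerBound

variable {n : ℕ} (a b c : Fin n → ℕ)

lemma mul_min_wOf_le_of_le_cutCost (S : Finset (V n))
    (h : 3 * (beta n a b c : ℚ) + Tsum n a b c ≤ cutCost n a b c S) :
    (3 * beta n a b c + Tsum n a b c : ℚ) * min (wOf n S) (wOf n Sᶜ) ≤
      12 * n * cutCost n a b c S := by
  have hmin : min (wOf n S) (wOf n Sᶜ) ≤ 12 * n := by
    linarith [wOf_add_wOf_compl S, min_le_left (wOf n S) (wOf n Sᶜ),
      min_le_right (wOf n S) (wOf n Sᶜ)]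
  have hQ : (0 : ℚ) ≤ 3 * beta n a b c + Tsum n a b c := by positivity
  have : (0 : ℚ) ≤ n := n.cast_nonneg
  nlinarith

variable {S : Finset (V n)}

lemma mul_min_wOf_le_cutCost_of_pathCut_eq (hn : 0 < n)
    (hpair : ∀ i j : Fin n, ∀ h : (i : ℕ) + j + 1 < n, c ⟨i + j + 1, h⟩ ≤ a i + b j)
    (hu : V.u ∉ S) (hv : V.v ∈ S) (i j k : Fin n) (hA : pathCut S 0 = {(i : ℕ) + 1})
    (hB : pathCut S 1 = {(j : ℕ) + 1}) (hC : pathCut S 2 = {(k : ℕ) + 1}) :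
    (3 * beta n a b c + Tsum n a b c : ℚ) * min (wOf n S) (wOf n Sᶜ) ≤
      12 * n * cutCost n a b c S := by
  have hcost := cutCost_of_pathCut_eq a b c i j k hn hA hB hC
  have hw := wOf_of_pathCut_eq i j k hu hv hA hB hC
  have hwc := wOf_add_wOf_compl S
  have of_unbalanced (hmin : min (wOf n S) (wOf n Sᶜ) ≤ 12 * n - 1) :
      (3 * beta n a b c + Tsum n a b c : ℚ) * min (wOf n S) (wOf n Sᶜ) ≤
        12 * n * cutCost n a b c S := by
    have hab : (0 : ℚ) ≤ a i + b j := by positivity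
    have hc : (c k : ℚ) ≤ Tsum n a b c := by exact_mod_cast c_le_Tsum a b c k
    have hnT := four_mul_mul_Tsum_le_beta a b c hn
    rw [hcost]
    nlinarith
  rcases lt_trichotomy (k : ℕ) (i + j + 1) with hlt | heq | hgt
  · have : (k : ℚ) + 1 ≤ i + j + 1 := by exact_mod_cast hlt
    exact of_unbalanced ((min_le_right _ _).trans (by linarith))
  · have hk : (⟨i + j + 1, heq ▸ k.isLt⟩ : Fin n) = k := Fin.ext heq.symm
    have hck : (c k : ℚ) ≤ a i + b j := by exact_mod_cast hk ▸ hpair i j (heq ▸ k.isLt)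
    exact mul_min_wOf_le_of_le_cutCost a b c S (by linarith)
  · have : (i : ℚ) + j + 2 ≤ k := by exact_mod_cast hgt
    exact of_unbalanced ((min_le_left _ _).trans (by linarith))

lemma mul_min_wOf_le_cutCost (hn : 0 < n)
    (hpair : ∀ i j : Fin n, ∀ h : (i : ℕ) + j + 1 < n, c ⟨i + j + 1, h⟩ ≤ a i + b j)
    (hv : V.v ∈ S) (hS : S ≠ univ) :
    (3 * beta n a b c + Tsum n a b c : ℚ) * min (wOf n S) (wOf n Sᶜ) ≤
      12 * n * cutCost n a b c S := by
  by_cases h0 : ∃ p, 0 ∈ pathCut S p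
  · obtain ⟨p, hp⟩ := h0
    exact mul_min_wOf_le_of_le_cutCost a b c S
      ((three_beta_add_Tsum_le_ecost_pathEdge_zero a b c hn p).trans (ecost_le_cutCost a b c hn hp))
  push Not at h0
  have hcard := beta_mul_card_pathCut_le_cutCost a b c hn S
  have hTβ := Tsum_le_beta a b c hn
  by_cases h4 : 4 ≤ ∑ p, #(pathCut S p)
  · refine mul_min_wOf_le_of_le_cutCost a b c S (le_trans ?_ hcard)
    have : (4 : ℚ) ≤ ∑ p, (#(pathCut S p) : ℚ) := by exact_mod_cast h4
    nlinarith
  by_cases hu : V.u ∈ S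
  · have h2 : (2 : ℚ) ≤ ∑ p, (#(pathCut S p) : ℚ) := by
      exact_mod_cast two_le_card_pathCut hu hv hS
    have hw := (min_le_right (wOf n S) _).trans (wOf_compl_le hu hv)
    calc (3 * beta n a b c + Tsum n a b c : ℚ) * min (wOf n S) (wOf n Sᶜ)
        ≤ (3 * beta n a b c + Tsum n a b c : ℚ) * (3 * n) := by gcongr
      _ ≤ 12 * n * (beta n a b c * 2) := by nlinarith
      _ ≤ 12 * n * (beta n a b c * ∑ p, (#(pathCut S p) : ℚ)) := by gcongr
      _ ≤ 12 * n * cutCost n a b c S := by gcongr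
  obtain ⟨i, hA⟩ := exists_pathCut_eq_singleton hu hv (by omega) h0 0
  obtain ⟨j, hB⟩ := exists_pathCut_eq_singleton hu hv (by omega) h0 1
  obtain ⟨k, hC⟩ := exists_pathCut_eq_singleton hu hv (by omega) h0 2
  exact mul_min_wOf_le_cutCost_of_pathCut_eq a b c hn hpair hu hv i j k hA hB hC

end LowerBound

section Witness

variable {n : ℕ} (i j k : Fin n)

def threeCut : Finset (V n) :=
  insert V.v ((Iic i).image V.A ∪ (Iic j).image V.B ∪ (Ioi k).image V.C)

lemma pathCut_threeCut :
    pathCut (threeCut i j k) 0 = {(i : ℕ) + 1} ∧ pathCut (threeCut i j k) 1 = {(j : ℕ) + 1} ∧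
      pathCut (threeCut i j k) 2 = {(k : ℕ) + 1} := by
  refine ⟨?_, ?_, ?_⟩ <;>
  · refine (pathCut_eq_singleton_iff (S := threeCut i j k) (by omega)).mpr ⟨fun t => ?_, ?_⟩
    all_goals simp only [threeCut, source, target, inner, Matrix.cons_val_zero, Matrix.cons_val_one,
      Matrix.cons_val_two, Matrix.head_cons, Matrix.tail_cons]
    all_goals simp only [mem_insert, mem_union, mem_image, mem_Iic, mem_Ioi, reduceCtorEq,
      V.A.injEq, V.B.injEq, V.C.injEq, exists_eq_right, and_false, exists_false, or_false,
      false_or, true_iff, false_iff, not_true_eq_false, not_false_eq_true, Fin.le_def, Fin.lt_def]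
    all_goals omega

lemma u_notMem_threeCut : V.u ∉ threeCut i j k := by simp [threeCut]

lemma v_mem_threeCut : V.v ∈ threeCut i j k := by simp [threeCut]

end Witness

section Quotient

variable {n : ℕ} (a b c : Fin n → ℕ)

lemma le_quotientVal (hn : 0 < n)
    (hpair : ∀ i j : Fin n, ∀ h : (i : ℕ) + j + 1 < n, c ⟨i + j + 1, h⟩ ≤ a i + b j)
    {S : Finset (V n)} (hS : S.Nonempty) (hS' : S ≠ univ) :
    (3 * (beta n a b c : ℚ) + Tsum n a b c) / (12 * n) ≤ quotientVal n a b c S := by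
  have hSc : Sᶜ.Nonempty := (compl_ne_univ_iff_nonempty Sᶜ).mp (by rwa [compl_compl])
  rw [quotientVal, div_le_div_iff₀ (by positivity) (lt_min (wOf_pos hn hS) (wOf_pos hn hSc)),
    mul_comm _ (12 * (n : ℚ))]
  by_cases hv : V.v ∈ S
  · exact mul_min_wOf_le_cutCost a b c hn hpair hv hS'
  · have := mul_min_wOf_le_cutCost a b c hn hpair (S := Sᶜ) (mem_compl.mpr hv)
      (compl_ne_univ_iff_nonempty S |>.mpr hS)
    rwa [compl_compl, cutCost_compl, min_comm] at this

lemma quotientVal_threeCut_lt (i j : Fin n) (h : (i : ℕ) + j + 1 < n)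
    (hlt : a i + b j < c ⟨i + j + 1, h⟩) :
    quotientVal n a b c (threeCut i j ⟨i + j + 1, h⟩) <
      (3 * (beta n a b c : ℚ) + Tsum n a b c) / (12 * n) := by
  set k : Fin n := ⟨i + j + 1, h⟩
  have hn : 0 < n := by omega
  obtain ⟨hA, hB, hC⟩ := pathCut_threeCut i j k
  have hw : wOf n (threeCut i j k) = 12 * n := by
    rw [wOf_of_pathCut_eq i j k (u_notMem_threeCut i j k) (v_mem_threeCut i j k) hA hB hC]
    simp [k]
  have hwc : wOf n (threeCut i j k)ᶜ = 12 * n := by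
    linarith [wOf_add_wOf_compl (threeCut i j k)]
  rw [quotientVal, cutCost_of_pathCut_eq a b c i j k hn hA hB hC, hw, hwc, min_self]
  have : (a i : ℚ) + b j < c k := by exact_mod_cast hlt
  exact div_lt_div_of_pos_right (by linarith) (by positivity)

end Quotient

theorem min_quotient_iff_convolution_general (n : ℕ) (hn : 1 < n) (a b c : Fin n → ℕ) :
    (∀ S : Finset (V n), S.Nonempty → S ≠ Finset.univ →
      (3 * (beta n a b c : ℚ) + (Tsum n a b c : ℚ)) / (12 * n) ≤ quotientVal n a b c S)
    ↔ ¬ ∃ i j : Fin n, ∃ h : i.val + j.val + 1 < n,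
        a i + b j < c ⟨i.val + j.val + 1, h⟩ := by
  constructor
  · rintro hall ⟨i, j, h, hlt⟩
    exact (quotientVal_threeCut_lt a b c i j h hlt).not_ge
      (hall _ ⟨V.v, v_mem_threeCut i j _⟩ (fun h => u_notMem_threeCut i j _ (h ▸ mem_univ _)))
  · intro hpair S hS hS'
    push Not at hpair
    exact le_quotientVal a b c (by omega) hpair hS hS'

/-- The minimum quotient is at least `(3β + T)/(12n)` iff there is no pair `i, j`
(1-indexed) with `i + j ≤ n` and `a_i + b_j < c_{i+j}`. -/
theorem min_quotient_iff_convolution (n : ℕ) (hn : 1 < n) (a b c : Fin n → ℕ)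
    (ha : ∀ i, 0 < a i) (hb : ∀ i, 0 < b i) (hc : ∀ i, 0 < c i) :
    (∀ S : Finset (V n), S.Nonempty → S ≠ Finset.univ →
      (3 * (beta n a b c : ℚ) + (Tsum n a b c : ℚ)) / (12 * n) ≤ quotientVal n a b c S)
    ↔ ¬ ∃ i j : Fin n, ∃ h : i.val + j.val + 1 < n,
        a i + b j < c ⟨i.val + j.val + 1, h⟩ :=
  min_quotient_iff_convolution_general n hn a b c

end SCLB
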